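/- If f : H_n → H_n is an additive commuting map, then for each 2 ≤ i ≤ n−1 and every X ∈ H_n, the (1,i)-entry of f(X) equals Σ_{j=2}^{n−1} [ X_{1,j}·f_{j,n}(e_{i,n}) − f_{1,j}(e_{i,n})·X_{j,n} ], where f_{a,b}(Y) denotes the (a,b)-entry of f(Y). -/

import Mathlib

/-!
Linearizing `[f X, X] = 0` at `X + E` with `E = e_{i,n}` gives `[f X, E] = [X, f E]`.
Its `(1, n)` entry reads off `f_{1,i}(X)`: in `(f X) E` only the column `i` of `f X` survives,
while `E (f X)` vanishes there because `E` has no first row. The diagonal of a Heisenberg matrix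
is zero, so the terms `j = 1` and `j = n` of the resulting sum drop out.
-/

open Matrix

/-- `X` belongs to the Heisenberg algebra `H_n`: its only possibly nonzero entries lie
in the first row strictly above the diagonal or the last column strictly above the diagonal
(0-based indices: row 0 with column ≠ 0, or column `n-1` with row ≠ `n-1`). -/
def IsHeis {n : ℕ} {F : Type*} [Field F] (X : Matrix (Fin n) (Fin n) F) : Prop :=
  ∀ i j : Fin n, ¬ ((i.val = 0 ∧ j.val ≠ 0) ∨ (j.val = n - 1 ∧ i.val ≠ n - 1)) → X i j = 0

/-- Anti-transpose: `(antiT X) i j = X (rev j) (rev i)`. -/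
def antiT {n : ℕ} {F : Type*} [Field F] (X : Matrix (Fin n) (Fin n) F) :
    Matrix (Fin n) (Fin n) F :=
  Matrix.of fun i j => X j.rev i.rev

/-- `A ∈ C_n`: first and last rows and columns of `A` are zero. -/
def IsC {n : ℕ} {F : Type*} [Field F] (A : Matrix (Fin n) (Fin n) F) : Prop :=
  ∀ i j : Fin n, (i.val = 0 ∨ i.val = n - 1 ∨ j.val = 0 ∨ j.val = n - 1) → A i j = 0

/-- `A ∈ P_n`: hollow skew-persymmetric matrices in `C_n`. -/
def IsP {n : ℕ} {F : Type*} [Field F] (A : Matrix (Fin n) (Fin n) F) : Prop :=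
  IsC A ∧ (∀ i j : Fin n, antiT A i j = - A i j) ∧ (∀ i : Fin n, A i i.rev = 0)

theorem commuting_map_linearize {R : Type*} [Ring R] {P : R → Prop} {f : R → R}
    (hadd : ∀ x y, P x → P y → f (x + y) = f x + f y) (hcomm : ∀ x, P x → f x * x = x * f x)
    {x y : R} (hx : P x) (hy : P y) (hxy : P (x + y)) :
    f x * y + f y * x = x * f y + y * f x := by
  have h := hcomm (x + y) hxy
  rw [hadd x y hx hy] at h
  simp only [add_mul, mul_add, hcomm x hx, hcomm y hy] at h
  rw [← sub_eq_zero] at h ⊢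
  rw [← h]
  abel

theorem apply_eq_sum_of_mul_single_add {n R : Type*} [Fintype n] [DecidableEq n] [CommRing R]
    {A B X : Matrix n n R} {i l a : n} (ha : a ≠ i)
    (h : A * single i l 1 + B * X = X * B + single i l 1 * A) :
    A a i = ∑ k, (X a k * B k l - B a k * X k l) := by
  have h := congrFun (congrFun h a) l
  rw [Matrix.add_apply, Matrix.add_apply, mul_single_apply_same, single_mul_apply_of_ne (h := ha),
    mul_one, add_zero, mul_apply, mul_apply] at h
  rw [Finset.sum_sub_distrib]
  linear_combination h

section Heisenberg

variable {n : ℕ} {F : Type*} [Field F] {X Y : Matrix (Fin n) (Fin n) F}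

theorem IsHeis.add (hX : IsHeis X) (hY : IsHeis Y) : IsHeis (X + Y) := fun i j h => by
  simp [hX i j h, hY i j h]

theorem IsHeis.apply_self (hX : IsHeis X) (i : Fin n) : X i i = 0 :=
  hX i i (by omega)

theorem isHeis_single {i j : Fin n} (hi : i.val ≠ n - 1) (hj : j.val = n - 1) (c : F) :
    IsHeis (single i j c) := by
  intro a b hab
  rw [single_apply_of_ne]
  rintro ⟨rfl, rfl⟩
  omega

theorem IsHeis.sum_eq_sum_interior (hX : IsHeis X) (hY : IsHeis Y) {a l : Fin n}
    (ha : a.val = 0) (hl : l.val = n - 1) :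
    ∑ k, (X a k * Y k l - Y a k * X k l) =
      ∑ k : Fin n, if 1 ≤ k.val ∧ k.val ≤ n - 2 then X a k * Y k l - Y a k * X k l else 0 := by
  refine Finset.sum_congr rfl fun k _ => ?_
  split_ifs with hk
  · rfl
  obtain rfl | rfl : k = a ∨ k = l := by omega
  · simp [hX.apply_self, hY.apply_self]
  · simp [hX.apply_self, hY.apply_self]

end Heisenberg

theorem stmt12 {n : ℕ} (hn : 3 ≤ n) {F : Type*} [Field F]
    (f : Matrix (Fin n) (Fin n) F → Matrix (Fin n) (Fin n) F)
    (hmaps : ∀ X, IsHeis X → IsHeis (f X))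
    (hadd : ∀ X Y, IsHeis X → IsHeis Y → f (X + Y) = f X + f Y)
    (hcomm : ∀ X, IsHeis X → f X * X = X * f X) :
    ∀ i : Fin n, 1 ≤ i.val → i.val ≤ n - 2 → ∀ X, IsHeis X →
      f X ⟨0, by omega⟩ i =
        ∑ j : Fin n, if 1 ≤ j.val ∧ j.val ≤ n - 2 then
          X ⟨0, by omega⟩ j * f (Matrix.single i ⟨n - 1, by omega⟩ (1 : F)) j ⟨n - 1, by omega⟩
          - f (Matrix.single i ⟨n - 1, by omega⟩ (1 : F)) ⟨0, by omega⟩ j * X j ⟨n - 1, by omega⟩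
        else 0 := by
  intro i hi1 hi2 X hX
  have hE : IsHeis (single i ⟨n - 1, by omega⟩ (1 : F)) := isHeis_single (by omega) rfl 1
  have hlin := commuting_map_linearize hadd hcomm hX hE (hX.add hE)
  rw [apply_eq_sum_of_mul_single_add (Fin.ne_of_val_ne (by simp only; omega)) hlin,
    hX.sum_eq_sum_interior (hmaps _ hE) rfl rfl]
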